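/- Let R(t) be a polynomial with real coefficients of degree d ≥ 1 such that the coefficient of t^j is irrational for some 1 ≤ j ≤ d, and let L : ℕ → ℝ be a function with L(N) → +∞. Then max_{1 ≤ i ≤ d} L(N)^i · ‖ R^{(i)}(N) / i! ‖_{ℝ/ℤ} → +∞ as N → ∞ along the natural numbers, where R^{(i)} denotes the i-th derivative of R and ‖x‖_{ℝ/ℤ} denotes the distance from the real number x to the nearest integer. -/

import Mathlib

open Filter Topology Polynomial

noncomputable section

/-- `‖x‖_{ℝ/ℤ}`: the distance from the real number `x` to the nearest integer. -/
def distToInt (x : ℝ) : ℝ := |x - (round x : ℤ)|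

/-! Let `j` be the largest index whose coefficient `a_j` of `R` is not an integer; then
`1 ≤ j ≤ d`. Since `R⁽ʲ⁾(N)/j! = ∑_{k ≥ j} (k choose j) a_k N^(k-j)` and every `a_k` with
`k > j` is an integer, `R⁽ʲ⁾(N)/j! ≡ a_j mod ℤ` for every natural `N`. Hence the `j`-th term of
the maximum equals `L(N)^j ‖a_j‖_{ℝ/ℤ}` with `‖a_j‖_{ℝ/ℤ} > 0`, which already tends to `+∞`. -/

namespace Polynomial

variable {A : Type*}

lemma exists_greatest_coeff_notMem [Semiring A] (p : A[X]) {S : Set A}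
    (hS : (0 : A) ∈ S) {j₀ : ℕ} (hj₀ : p.coeff j₀ ∉ S) :
    ∃ j, j₀ ≤ j ∧ p.coeff j ∉ S ∧ ∀ k, j < k → p.coeff k ∈ S := by
  classical
  have hj₀d : j₀ ≤ p.natDegree := le_natDegree_of_ne_zero fun h => hj₀ (h ▸ hS)
  refine ⟨Nat.findGreatest (fun j => p.coeff j ∉ S) p.natDegree, Nat.le_findGreatest hj₀d hj₀,
    Nat.findGreatest_spec (P := fun j => p.coeff j ∉ S) hj₀d hj₀, fun k hk => ?_⟩
  rcases le_or_gt k p.natDegree with hkd | hkd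
  · exact not_not.mp (Nat.findGreatest_is_greatest hk hkd)
  · exact coeff_eq_zero_of_natDegree_lt hkd ▸ hS

lemma hasseDeriv_eval_sub_coeff_mem [CommRing A] (p : A[X]) {S : Subring A} {i : ℕ} {x : A}
    (hx : x ∈ S) (hp : ∀ k, i < k → p.coeff k ∈ S) :
    (hasseDeriv i p).eval x - p.coeff i ∈ S := by
  rw [eval_eq_sum_range, Finset.sum_range_succ', hasseDeriv_coeff, zero_add, Nat.choose_self,
    Nat.cast_one, one_mul, pow_zero, mul_one, add_sub_cancel_right]
  refine S.sum_mem fun n _ => S.mul_mem ?_ (S.pow_mem hx _)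
  rw [hasseDeriv_coeff]
  exact S.mul_mem (natCast_mem S _) (hp _ (by omega))

lemma iterate_derivative_eval_div_factorial {K : Type*} [Field K] [CharZero K] (p : K[X])
    (i : ℕ) (x : K) : (derivative^[i] p).eval x / i.factorial = (hasseDeriv i p).eval x := by
  rw [← factorial_smul_hasseDeriv, LinearMap.smul_apply, nsmul_eq_mul, eval_mul,
    eval_natCast, mul_div_cancel_left₀ _ (Nat.cast_ne_zero.mpr i.factorial_ne_zero)]

end Polynomial

lemma distToInt_add_intCast (x : ℝ) (m : ℤ) : distToInt (x + m) = distToInt x := by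
  simp only [distToInt, round_add_intCast, Int.cast_add, add_sub_add_right_eq_sub]

lemma distToInt_eq_of_sub_mem_bot {x y : ℝ} (h : x - y ∈ (⊥ : Subring ℝ)) :
    distToInt x = distToInt y := by
  obtain ⟨m, hm⟩ := Subring.mem_bot.mp h
  rw [show x = y + m by rw [hm]; ring, distToInt_add_intCast]

lemma distToInt_pos {x : ℝ} (hx : x ∉ (⊥ : Subring ℝ)) : 0 < distToInt x :=
  abs_pos.mpr <| sub_ne_zero.mpr fun h => hx (Subring.mem_bot.mpr ⟨round x, h.symm⟩)

lemma Irrational.notMem_bot {x : ℝ} (hx : Irrational x) : x ∉ (⊥ : Subring ℝ) := by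
  rintro ⟨m, rfl⟩
  exact m.not_irrational hx

/-- If `R` is a real polynomial of degree `d ≥ 1` having an irrational
coefficient in some degree `1 ≤ j ≤ d`, and `L(N) → +∞`, then
`max_{1 ≤ i ≤ d} L(N)^i · ‖R⁽ⁱ⁾(N)/i!‖_{ℝ/ℤ} → +∞` as `N → ∞`. -/
theorem stmt_17 (R : Polynomial ℝ) (hd : 1 ≤ R.natDegree)
    (hirr : ∃ j : ℕ, 1 ≤ j ∧ j ≤ R.natDegree ∧ Irrational (R.coeff j))
    (L : ℕ → ℝ) (hL : Filter.Tendsto L Filter.atTop Filter.atTop) :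
    Filter.Tendsto
      (fun N : ℕ => (Finset.Icc 1 R.natDegree).sup'
        (Finset.nonempty_Icc.mpr hd)
        (fun i : ℕ => L N ^ i *
          distToInt (((Polynomial.derivative)^[i] R).eval (N : ℝ) / (Nat.factorial i))))
      Filter.atTop Filter.atTop := by
  obtain ⟨j₀, hj₀, -, hj₀irr⟩ := hirr
  obtain ⟨j, hj₀j, hj, hgt⟩ :=
    R.exists_greatest_coeff_notMem (Subring.zero_mem ⊥) hj₀irr.notMem_bot
  have hjd : j ≤ R.natDegree := le_natDegree_of_ne_zero fun h => hj (h ▸ Subring.zero_mem ⊥)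
  have hterm (N : ℕ) : distToInt ((derivative^[j] R).eval (N : ℝ) / j.factorial) =
      distToInt (R.coeff j) := by
    rw [iterate_derivative_eval_div_factorial]
    exact distToInt_eq_of_sub_mem_bot (R.hasseDeriv_eval_sub_coeff_mem (natCast_mem _ N) hgt)
  refine tendsto_atTop_mono (fun N => Finset.le_sup' _ (Finset.mem_Icc.mpr ⟨by omega, hjd⟩)) ?_
  simp only [hterm]
  exact ((tendsto_pow_atTop (by omega)).comp hL).atTop_mul_const (distToInt_pos hj)

end
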